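/- arXiv:2008.01264 — 2 statements merged into one kernel-verified Lean document; each statement's English description precedes it below -/
import Mathlib

section
/- Let C ⊂ ℝ^k be compact convex, 0 ∈ ∂C, E a linear subspace with C ∩ E = {0}, P the orthogonal projection onto E. For any x ∈ C \ {0} with Px ≠ 0, there exists a ∈ [0,1) such that the point y = (1−a)x + a·Px lies on the boundary ∂C, satisfies Py = Px, ‖(I−P)y‖₂ ≤ ‖(I−P)x‖₂, and ‖x‖₂/‖(I−P)x‖₂ ≤ ‖y‖₂/‖(I−P)y‖₂. Consequently, sup over C\{0} of ‖x‖₂/‖(I−P)x‖₂ is finite iff the sup over ∂C\{0} is finite. -/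
/-!
For `x ∈ C` with `Px ∉ C`, the segment from `x` to `Px` leaves the closed set `C`, so it meets
`∂C` at some `y = (1 - a) x + a Px` with `a < 1`. Along this segment `Px` stays fixed and
`x - Px` is scaled by `1 - a`, while Pythagoras gives `‖y‖ ≥ (1 - a) ‖x‖`. Hence
`‖x‖ / ‖x - Px‖ ≤ ‖y‖ / ‖y - Py‖`, so a bound on `∂C \ {0}` is a bound on `C \ {0}`.
-/

open Set

theorem IsPreconnected.inter_frontier_nonempty {X : Type*} [TopologicalSpace X] {s t : Set X}
    (hs : IsPreconnected s) (hst : (s ∩ t).Nonempty) (hst' : (s \ t).Nonempty) :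
    (s ∩ frontier t).Nonempty := by
  rw [frontier_eq_closure_inter_closure]
  refine isPreconnected_closed_iff.1 hs _ _ isClosed_closure isClosed_closure
    (fun p _ ↦ ?_) (hst.mono <| inter_subset_inter_right _ subset_closure)
    (hst'.mono <| inter_subset_inter_right _ subset_closure)
  by_cases hp : p ∈ t
  · exact .inl (subset_closure hp)
  · exact .inr (subset_closure hp)

theorem exists_mem_Ico_sub_smul_add_smul_mem_frontier {X : Type*} [TopologicalSpace X]
    [AddCommGroup X] [Module ℝ X] [ContinuousAdd X] [ContinuousSMul ℝ X] {C : Set X}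
    (hC : IsClosed C) {x z : X} (hx : x ∈ C) (hz : z ∉ C) :
    ∃ a ∈ Ico (0 : ℝ) 1, (1 - a) • x + a • z ∈ frontier C := by
  obtain ⟨p, hp, hpC⟩ := (convex_segment x z).isPreconnected.inter_frontier_nonempty
    ⟨x, left_mem_segment ℝ x z, hx⟩ ⟨z, right_mem_segment ℝ x z, hz⟩
  rw [segment_eq_image] at hp
  obtain ⟨a, ⟨ha0, ha1⟩, rfl⟩ := hp
  refine ⟨a, ⟨ha0, ha1.lt_of_ne ?_⟩, hpC⟩
  rintro rfl
  exact hz (by simpa using hC.frontier_subset hpC)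

namespace Submodule

variable {F : Type*} [NormedAddCommGroup F] [InnerProductSpace ℝ F] (K : Submodule ℝ F)
  [K.HasOrthogonalProjection]

theorem norm_sq_eq_norm_starProjection_sq_add_norm_sub_sq (v : F) :
    ‖v‖ ^ 2 = ‖K.starProjection v‖ ^ 2 + ‖v - K.starProjection v‖ ^ 2 := by
  rw [K.norm_sq_eq_add_norm_sq_starProjection v, starProjection_orthogonal_val]

theorem sub_starProjection_ne_zero {v : F} (hv : v ∉ K) : v - K.starProjection v ≠ 0 :=
  sub_ne_zero.2 fun h ↦ hv (starProjection_eq_self_iff.1 h.symm)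

variable (x : F) (a : ℝ)

theorem starProjection_sub_smul_add_smul_starProjection :
    K.starProjection ((1 - a) • x + a • K.starProjection x) = K.starProjection x := by
  rw [map_add, map_smul, map_smul, starProjection_eq_self_iff.2 (K.starProjection_apply_mem x),
    ← add_smul, sub_add_cancel, one_smul]

theorem sub_smul_add_smul_starProjection_sub_starProjection :
    (1 - a) • x + a • K.starProjection x - K.starProjection ((1 - a) • x + a • K.starProjection x) =
      (1 - a) • (x - K.starProjection x) := by
  rw [starProjection_sub_smul_add_smul_starProjection]
  module

theorem norm_smul_le_norm_sub_smul_add_smul_starProjection (ha : |1 - a| ≤ 1) :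
    ‖(1 - a) • x‖ ≤ ‖(1 - a) • x + a • K.starProjection x‖ := by
  have hy :=
    K.norm_sq_eq_norm_starProjection_sq_add_norm_sub_sq ((1 - a) • x + a • K.starProjection x)
  rw [sub_smul_add_smul_starProjection_sub_starProjection,
    starProjection_sub_smul_add_smul_starProjection] at hy
  have hx := K.norm_sq_eq_norm_starProjection_sq_add_norm_sub_sq x
  rw [← sq_le_sq₀ (norm_nonneg _) (norm_nonneg _), hy, norm_smul, norm_smul, mul_pow, mul_pow, hx,
    Real.norm_eq_abs, sq_abs]
  have : (1 - a) ^ 2 ≤ 1 := by nlinarith [abs_nonneg (1 - a), sq_abs (1 - a)]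
  nlinarith [sq_nonneg ‖K.starProjection x‖, sq_nonneg ‖x - K.starProjection x‖]

variable {C : Set F}

theorem exists_sub_smul_add_smul_starProjection_mem_frontier (hC : IsClosed C) {x : F}
    (hx : x ∈ C) (hPx : K.starProjection x ∉ C) :
    ∃ a ∈ Ico (0 : ℝ) 1,
      (1 - a) • x + a • K.starProjection x ∈ frontier C ∧
      K.starProjection ((1 - a) • x + a • K.starProjection x) = K.starProjection x ∧
      ‖(1 - a) • x + a • K.starProjection x -
          K.starProjection ((1 - a) • x + a • K.starProjection x)‖ ≤ ‖x - K.starProjection x‖ ∧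
      ‖x‖ * ‖(1 - a) • x + a • K.starProjection x -
          K.starProjection ((1 - a) • x + a • K.starProjection x)‖ ≤
        ‖(1 - a) • x + a • K.starProjection x‖ * ‖x - K.starProjection x‖ := by
  obtain ⟨a, ⟨ha0, ha1⟩, hfr⟩ := exists_mem_Ico_sub_smul_add_smul_mem_frontier hC hx hPx
  have habs : |1 - a| = 1 - a := abs_of_pos (sub_pos.2 ha1)
  refine ⟨a, ⟨ha0, ha1⟩, hfr, K.starProjection_sub_smul_add_smul_starProjection x a, ?_, ?_⟩
  · rw [sub_smul_add_smul_starProjection_sub_starProjection, norm_smul, Real.norm_eq_abs, habs]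
    exact mul_le_of_le_one_left (norm_nonneg _) (by linarith)
  · calc ‖x‖ * ‖(1 - a) • x + a • K.starProjection x -
          K.starProjection ((1 - a) • x + a • K.starProjection x)‖
        = ‖(1 - a) • x‖ * ‖x - K.starProjection x‖ := by
          rw [sub_smul_add_smul_starProjection_sub_starProjection, norm_smul, norm_smul]; ring
      _ ≤ ‖(1 - a) • x + a • K.starProjection x‖ * ‖x - K.starProjection x‖ := by
          gcongr
          exact K.norm_smul_le_norm_sub_smul_add_smul_starProjection x a (by linarith)

theorem exists_norm_le_mul_norm_sub_starProjection_iff_frontier (hC : IsClosed C)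
    (hCK : C ∩ K ⊆ {0}) :
    (∃ M : ℝ, ∀ x ∈ C \ {0}, ‖x‖ ≤ M * ‖x - K.starProjection x‖) ↔
      ∃ M : ℝ, ∀ x ∈ frontier C \ {0}, ‖x‖ ≤ M * ‖x - K.starProjection x‖ := by
  refine ⟨fun ⟨M, hM⟩ ↦ ⟨M, fun x hx ↦ hM x ⟨hC.frontier_subset hx.1, hx.2⟩⟩, fun ⟨M, hM⟩ ↦ ?_⟩
  refine ⟨max M 1, fun x ⟨hxC, hx0⟩ ↦ ?_⟩
  by_cases hPx : K.starProjection x = 0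
  · rw [hPx, sub_zero]
    exact le_mul_of_one_le_left (norm_nonneg x) (le_max_right M 1)
  obtain ⟨a, -, hfr, hPy, -, hcross⟩ := K.exists_sub_smul_add_smul_starProjection_mem_frontier hC
    hxC fun hPxC ↦ hPx (hCK ⟨hPxC, K.starProjection_apply_mem x⟩)
  set y := (1 - a) • x + a • K.starProjection x
  have hy0 : y ≠ 0 := fun hy ↦ hPx (by rw [← hPy, hy, map_zero])
  have hyK : y ∉ K := fun hyK ↦ hy0 (hCK ⟨hC.frontier_subset hfr, hyK⟩)
  have hyPy := norm_pos_iff.2 (K.sub_starProjection_ne_zero hyK)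
  have hxy : ‖x‖ * ‖y - K.starProjection y‖ ≤
      (M * ‖x - K.starProjection x‖) * ‖y - K.starProjection y‖ :=
    calc _ ≤ ‖y‖ * ‖x - K.starProjection x‖ := hcross
      _ ≤ (M * ‖y - K.starProjection y‖) * ‖x - K.starProjection x‖ := by
        gcongr; exact hM y ⟨hfr, hy0⟩
      _ = _ := by ring
  calc ‖x‖ ≤ M * ‖x - K.starProjection x‖ := le_of_mul_le_mul_right hxy hyPy
    _ ≤ max M 1 * ‖x - K.starProjection x‖ := by gcongr; exact le_max_left M 1

end Submodule

theorem stmt12_general {k : ℕ} (C : Set (EuclideanSpace ℝ (Fin k)))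
    (hCcp : IsCompact C)
    (E : Submodule ℝ (EuclideanSpace ℝ (Fin k)))
    (hCE : C ∩ (E : Set (EuclideanSpace ℝ (Fin k))) = {0}) :
    (∀ x ∈ C \ ({0} : Set (EuclideanSpace ℝ (Fin k))),
        (Submodule.orthogonalProjectionOnto E x : EuclideanSpace ℝ (Fin k)) ≠ 0 →
        ∃ a ∈ Ico (0 : ℝ) 1,
          (1 - a) • x + a • (Submodule.orthogonalProjectionOnto E x : EuclideanSpace ℝ (Fin k)) ∈ frontier C ∧
          (Submodule.orthogonalProjectionOnto E
              ((1 - a) • x + a • (Submodule.orthogonalProjectionOnto E x : EuclideanSpace ℝ (Fin k))) :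
              EuclideanSpace ℝ (Fin k)) =
            (Submodule.orthogonalProjectionOnto E x : EuclideanSpace ℝ (Fin k)) ∧
          ‖((1 - a) • x + a • (Submodule.orthogonalProjectionOnto E x : EuclideanSpace ℝ (Fin k))) -
              (Submodule.orthogonalProjectionOnto E
                ((1 - a) • x + a • (Submodule.orthogonalProjectionOnto E x : EuclideanSpace ℝ (Fin k))) :
                EuclideanSpace ℝ (Fin k))‖ ≤
            ‖x - (Submodule.orthogonalProjectionOnto E x : EuclideanSpace ℝ (Fin k))‖ ∧
          ‖x‖ * ‖((1 - a) • x + a • (Submodule.orthogonalProjectionOnto E x : EuclideanSpace ℝ (Fin k))) -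
              (Submodule.orthogonalProjectionOnto E
                ((1 - a) • x + a • (Submodule.orthogonalProjectionOnto E x : EuclideanSpace ℝ (Fin k))) :
                EuclideanSpace ℝ (Fin k))‖ ≤
            ‖(1 - a) • x + a • (Submodule.orthogonalProjectionOnto E x : EuclideanSpace ℝ (Fin k))‖ *
              ‖x - (Submodule.orthogonalProjectionOnto E x : EuclideanSpace ℝ (Fin k))‖) ∧
    ((∃ M : ℝ, ∀ x ∈ C \ ({0} : Set (EuclideanSpace ℝ (Fin k))),
        ‖x‖ ≤ M * ‖x - (Submodule.orthogonalProjectionOnto E x : EuclideanSpace ℝ (Fin k))‖) ↔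
      (∃ M : ℝ, ∀ x ∈ frontier C \ ({0} : Set (EuclideanSpace ℝ (Fin k))),
        ‖x‖ ≤ M * ‖x - (Submodule.orthogonalProjectionOnto E x : EuclideanSpace ℝ (Fin k))‖)) := by
  have hCK : C ∩ E ⊆ {0} := hCE.subset
  simp only [Submodule.coe_orthogonalProjectionOnto_apply]
  refine ⟨fun x hx hPx ↦ ?_,
    E.exists_norm_le_mul_norm_sub_starProjection_iff_frontier hCcp.isClosed hCK⟩
  exact E.exists_sub_smul_add_smul_starProjection_mem_frontier hCcp.isClosed hx.1
    fun hPxC ↦ hPx (hCK ⟨hPxC, E.starProjection_apply_mem x⟩)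

/-- Let `C ⊂ ℝ^k` be compact convex with `0 ∈ ∂C`, `E` a linear subspace with
`C ∩ E = {0}`, and `P` the orthogonal projection onto `E`.  For every `x ∈ C \ {0}` with
`Px ≠ 0` there is `a ∈ [0,1)` such that `y = (1−a)x + a·Px` lies on `∂C`, `Py = Px`,
`‖(I−P)y‖ ≤ ‖(I−P)x‖`, and `‖x‖/‖(I−P)x‖ ≤ ‖y‖/‖(I−P)y‖` (stated in cross-multiplied form).
Consequently the supremum of `‖x‖/‖(I−P)x‖` over `C \ {0}` is finite iff the supremum over
`∂C \ {0}` is finite. -/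
theorem stmt12 {k : ℕ} (C : Set (EuclideanSpace ℝ (Fin k)))
    (hCcp : IsCompact C) (hCcv : Convex ℝ C) (h0 : (0 : EuclideanSpace ℝ (Fin k)) ∈ frontier C)
    (E : Submodule ℝ (EuclideanSpace ℝ (Fin k)))
    (hCE : C ∩ (E : Set (EuclideanSpace ℝ (Fin k))) = {0}) :
    (∀ x ∈ C \ ({0} : Set (EuclideanSpace ℝ (Fin k))),
        (Submodule.orthogonalProjectionOnto E x : EuclideanSpace ℝ (Fin k)) ≠ 0 →
        ∃ a ∈ Ico (0 : ℝ) 1,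
          (1 - a) • x + a • (Submodule.orthogonalProjectionOnto E x : EuclideanSpace ℝ (Fin k)) ∈ frontier C ∧
          (Submodule.orthogonalProjectionOnto E
              ((1 - a) • x + a • (Submodule.orthogonalProjectionOnto E x : EuclideanSpace ℝ (Fin k))) :
              EuclideanSpace ℝ (Fin k)) =
            (Submodule.orthogonalProjectionOnto E x : EuclideanSpace ℝ (Fin k)) ∧
          ‖((1 - a) • x + a • (Submodule.orthogonalProjectionOnto E x : EuclideanSpace ℝ (Fin k))) -
              (Submodule.orthogonalProjectionOnto E
                ((1 - a) • x + a • (Submodule.orthogonalProjectionOnto E x : EuclideanSpace ℝ (Fin k))) :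
                EuclideanSpace ℝ (Fin k))‖ ≤
            ‖x - (Submodule.orthogonalProjectionOnto E x : EuclideanSpace ℝ (Fin k))‖ ∧
          ‖x‖ * ‖((1 - a) • x + a • (Submodule.orthogonalProjectionOnto E x : EuclideanSpace ℝ (Fin k))) -
              (Submodule.orthogonalProjectionOnto E
                ((1 - a) • x + a • (Submodule.orthogonalProjectionOnto E x : EuclideanSpace ℝ (Fin k))) :
                EuclideanSpace ℝ (Fin k))‖ ≤
            ‖(1 - a) • x + a • (Submodule.orthogonalProjectionOnto E x : EuclideanSpace ℝ (Fin k))‖ *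
              ‖x - (Submodule.orthogonalProjectionOnto E x : EuclideanSpace ℝ (Fin k))‖) ∧
    ((∃ M : ℝ, ∀ x ∈ C \ ({0} : Set (EuclideanSpace ℝ (Fin k))),
        ‖x‖ ≤ M * ‖x - (Submodule.orthogonalProjectionOnto E x : EuclideanSpace ℝ (Fin k))‖) ↔
      (∃ M : ℝ, ∀ x ∈ frontier C \ ({0} : Set (EuclideanSpace ℝ (Fin k))),
        ‖x‖ ≤ M * ‖x - (Submodule.orthogonalProjectionOnto E x : EuclideanSpace ℝ (Fin k))‖)) :=
  stmt12_general C hCcp E hCE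
end

section
/- Let p and q be probability distributions on a finite set 𝒴 and let {|e(y)⟩}_{y∈𝒴} and {|f(y)⟩}_{y∈𝒴} be two orthonormal bases of a finite-dimensional Hilbert space. Define ρ = Σ_y p(y)|e(y)⟩⟨e(y)| and σ = Σ_y q(y)|f(y)⟩⟨f(y)|. Then 1 − (1/2)‖ρ − σ‖₁ ≥ (1/2)·Σ_{y,y'} min(p(y), q(y'))·|⟨e(y)|f(y')⟩|². -/
/-!
Diagonalise `ρ - σ` in an orthonormal eigenbasis `v`. Its eigenvalues are `P i - Q i`, where
`P i = ⟨v i|ρ|v i⟩` and `Q i = ⟨v i|σ|v i⟩` are two probability vectors, so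
`1 - ‖ρ - σ‖₁ / 2 = ∑ i, min (P i) (Q i)`. Split every overlap along `S = {i | Q i ≤ P i}` as
`⟨e y|Π_S f y'⟩ + ⟨Π_Sᶜ e y|f y'⟩`, where `Π_S` projects onto the span of the `v i` with
`i ∈ S`; then `min a b * ‖z + w‖² ≤ 2 (b ‖z‖² + a ‖w‖²)` together with
Bessel's inequality for `e` and `f` bounds the left-hand side by
`∑ i ∈ S, Q i + ∑ i ∉ S, P i = ∑ i, min (P i) (Q i)`.
-/

open ComplexOrder Matrix

open scoped InnerProductSpace

noncomputable def traceNorm {m : Type*} [Fintype m] [DecidableEq m]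
    (X : Matrix m m ℂ) : ℝ :=
  (((Matrix.posSemidef_conjTranspose_mul_self X).1.eigenvectorUnitary : Matrix m m ℂ) *
    diagonal ((fun x => ((Real.sqrt x : ℝ) : ℂ)) ∘
      (Matrix.posSemidef_conjTranspose_mul_self X).1.eigenvalues) *
    (star ((Matrix.posSemidef_conjTranspose_mul_self X).1.eigenvectorUnitary : Matrix m m ℂ))).trace.re

lemma sum_min_eq_half_sum_add_sub_sum_abs {ι : Type*} (s : Finset ι) (P Q : ι → ℝ) :
    ∑ i ∈ s, min (P i) (Q i) = (∑ i ∈ s, P i + ∑ i ∈ s, Q i - ∑ i ∈ s, |P i - Q i|) / 2 := by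
  have h : ∀ i, min (P i) (Q i) = (P i + Q i - |P i - Q i|) / 2 := fun i => by
    linarith [min_add_max (P i) (Q i), max_sub_min_eq_abs' (P i) (Q i)]
  simp only [h, ← Finset.sum_div, Finset.sum_sub_distrib, Finset.sum_add_distrib]

lemma min_mul_norm_add_sq_le {F : Type*} [SeminormedAddCommGroup F] {a b : ℝ} (ha : 0 ≤ a)
    (hb : 0 ≤ b) (z w : F) : min a b * ‖z + w‖ ^ 2 ≤ 2 * (b * ‖z‖ ^ 2 + a * ‖w‖ ^ 2) := by
  have h : ‖z + w‖ ^ 2 ≤ 2 * ‖z‖ ^ 2 + 2 * ‖w‖ ^ 2 := by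
    nlinarith [norm_add_le z w, norm_nonneg (z + w), sq_nonneg (‖z‖ - ‖w‖)]
  calc min a b * ‖z + w‖ ^ 2 ≤ min a b * (2 * ‖z‖ ^ 2 + 2 * ‖w‖ ^ 2) :=
        mul_le_mul_of_nonneg_left h (le_min ha hb)
    _ ≤ 2 * (b * ‖z‖ ^ 2 + a * ‖w‖ ^ 2) := by
        nlinarith [min_le_left a b, min_le_right a b, sq_nonneg ‖z‖, sq_nonneg ‖w‖]

section Overlap

variable {𝕜 E ι κ κ' : Type*} [RCLike 𝕜] [NormedAddCommGroup E] [InnerProductSpace 𝕜 E]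

lemma Orthonormal.norm_sum_smul_sq {v : ι → E} (hv : Orthonormal 𝕜 v) (s : Finset ι)
    (c : ι → 𝕜) : ‖∑ i ∈ s, c i • v i‖ ^ 2 = ∑ i ∈ s, ‖c i‖ ^ 2 := by
  rw [@norm_sq_eq_re_inner 𝕜, hv.inner_sum, map_sum]
  simp_rw [RCLike.conj_mul, ← RCLike.ofReal_pow, RCLike.ofReal_re]

lemma Orthonormal.sum_norm_sum_inner_mul_sq_le {u : κ → E} {v : ι → E} (hu : Orthonormal 𝕜 u)
    (hv : Orthonormal 𝕜 v) (s : Finset ι) (t : Finset κ) (c : ι → 𝕜) :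
    ∑ k ∈ t, ‖∑ i ∈ s, ⟪u k, v i⟫_𝕜 * c i‖ ^ 2 ≤ ∑ i ∈ s, ‖c i‖ ^ 2 := by
  have hw : ∀ k, ∑ i ∈ s, ⟪u k, v i⟫_𝕜 * c i = ⟪u k, ∑ i ∈ s, c i • v i⟫_𝕜 := fun k => by
    simp only [inner_sum, inner_smul_right, mul_comm]
  simp_rw [hw, ← hv.norm_sum_smul_sq s c]
  exact hu.sum_inner_products_le _

variable [Fintype ι] [Fintype κ] [Fintype κ']

/-- The `i`-th diagonal entry, in the basis `v`, of the operator `∑ y, p y • |e y⟩⟨e y|`. -/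
noncomputable def mixtureDiag (v : OrthonormalBasis ι 𝕜 E) (p : κ → ℝ) (e : κ → E) (i : ι) : ℝ :=
  ∑ y, p y * ‖⟪e y, v i⟫_𝕜‖ ^ 2

lemma sum_mixtureDiag (v : OrthonormalBasis ι 𝕜 E) (p : κ → ℝ) (e : κ → E) :
    ∑ i, mixtureDiag v p e i = ∑ y, p y * ‖e y‖ ^ 2 := by
  simp only [mixtureDiag]
  rw [Finset.sum_comm]
  simp_rw [← Finset.mul_sum, v.sum_sq_norm_inner_left]

lemma half_sum_min_mul_norm_inner_sq_le [DecidableEq ι] (v : OrthonormalBasis ι 𝕜 E)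
    {p : κ → ℝ} {q : κ' → ℝ} (hp : ∀ y, 0 ≤ p y) (hq : ∀ y', 0 ≤ q y') {e : κ → E} {f : κ' → E}
    (he : Orthonormal 𝕜 e) (hf : Orthonormal 𝕜 f) (S : Finset ι) :
    (1 / 2) * ∑ y, ∑ y', min (p y) (q y') * ‖⟪e y, f y'⟫_𝕜‖ ^ 2 ≤
      ∑ i ∈ S, mixtureDiag v q f i + ∑ i ∈ Sᶜ, mixtureDiag v p e i := by
  set A : κ → κ' → 𝕜 := fun y y' => ∑ i ∈ S, ⟪e y, v i⟫_𝕜 * ⟪v i, f y'⟫_𝕜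
  set B : κ → κ' → 𝕜 := fun y y' => ∑ i ∈ Sᶜ, ⟪e y, v i⟫_𝕜 * ⟪v i, f y'⟫_𝕜
  have hAB : ∀ y y', ⟪e y, f y'⟫_𝕜 = A y y' + B y y' := fun y y' => by
    rw [Finset.sum_add_sum_compl, v.sum_inner_mul_inner]
  have hA : ∀ y', ∑ y, ‖A y y'‖ ^ 2 ≤ ∑ i ∈ S, ‖⟪f y', v i⟫_𝕜‖ ^ 2 := fun y' => by
    simp only [norm_inner_symm (f y')]
    exact he.sum_norm_sum_inner_mul_sq_le v.orthonormal S Finset.univ _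
  have hB : ∀ y, ∑ y', ‖B y y'‖ ^ 2 ≤ ∑ i ∈ Sᶜ, ‖⟪e y, v i⟫_𝕜‖ ^ 2 := fun y => by
    have hconj : ∀ y', ‖B y y'‖ = ‖∑ i ∈ Sᶜ, ⟪f y', v i⟫_𝕜 * ⟪v i, e y⟫_𝕜‖ := fun y' => by
      rw [← RCLike.norm_conj, map_sum]
      simp_rw [map_mul, inner_conj_symm, mul_comm]
    simp only [hconj, norm_inner_symm (e y)]
    exact hf.sum_norm_sum_inner_mul_sq_le v.orthonormal Sᶜ Finset.univ _
  calc (1 / 2) * ∑ y, ∑ y', min (p y) (q y') * ‖⟪e y, f y'⟫_𝕜‖ ^ 2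
      ≤ (1 / 2) * ∑ y, ∑ y', 2 * (q y' * ‖A y y'‖ ^ 2 + p y * ‖B y y'‖ ^ 2) := by
        refine mul_le_mul_of_nonneg_left
          (Finset.sum_le_sum fun y _ => Finset.sum_le_sum fun y' _ => ?_) (by norm_num)
        rw [hAB]
        exact min_mul_norm_add_sq_le (hp y) (hq y') _ _
    _ = ∑ y', q y' * ∑ y, ‖A y y'‖ ^ 2 + ∑ y, p y * ∑ y', ‖B y y'‖ ^ 2 := by
        have h2 : ∀ y y', (1 / 2 : ℝ) * (2 * (q y' * ‖A y y'‖ ^ 2 + p y * ‖B y y'‖ ^ 2)) =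
            q y' * ‖A y y'‖ ^ 2 + p y * ‖B y y'‖ ^ 2 := fun _ _ => by ring
        simp only [Finset.mul_sum, h2, Finset.sum_add_distrib]
        rw [Finset.sum_comm (f := fun y y' => q y' * ‖A y y'‖ ^ 2)]
    _ ≤ ∑ y', q y' * ∑ i ∈ S, ‖⟪f y', v i⟫_𝕜‖ ^ 2 +
          ∑ y, p y * ∑ i ∈ Sᶜ, ‖⟪e y, v i⟫_𝕜‖ ^ 2 := by
        gcongr with y' _ y _
        exacts [hq y', hA y', hp y, hB y]
    _ = ∑ i ∈ S, mixtureDiag v q f i + ∑ i ∈ Sᶜ, mixtureDiag v p e i := by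
        simp_rw [mixtureDiag, Finset.mul_sum]
        rw [Finset.sum_comm, Finset.sum_comm (s := Finset.univ) (t := Sᶜ)]

lemma half_sum_min_mul_norm_inner_sq_le_sum_min (v : OrthonormalBasis ι 𝕜 E)
    {p : κ → ℝ} {q : κ' → ℝ} (hp : ∀ y, 0 ≤ p y) (hq : ∀ y', 0 ≤ q y') {e : κ → E} {f : κ' → E}
    (he : Orthonormal 𝕜 e) (hf : Orthonormal 𝕜 f) :
    (1 / 2) * ∑ y, ∑ y', min (p y) (q y') * ‖⟪e y, f y'⟫_𝕜‖ ^ 2 ≤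
      ∑ i, min (mixtureDiag v p e i) (mixtureDiag v q f i) := by
  classical
  set S := Finset.univ.filter fun i => mixtureDiag v q f i ≤ mixtureDiag v p e i
  convert half_sum_min_mul_norm_inner_sq_le v hp hq he hf S using 1
  rw [← Finset.sum_add_sum_compl S]
  congr 1 <;> refine Finset.sum_congr rfl fun i hi => ?_
  · exact min_eq_right (Finset.mem_filter.mp hi).2
  · rw [Finset.compl_filter, Finset.mem_filter, not_le] at hi
    exact min_eq_left hi.2.le

end Overlap

lemma Matrix.IsHermitian.trace_cfc_eq_sum {n 𝕜 : Type*} [RCLike 𝕜] [Fintype n] [DecidableEq n]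
    {A : Matrix n n 𝕜} (hA : A.IsHermitian) (f : ℝ → ℝ) :
    (cfc f A).trace = ∑ i, (f (hA.eigenvalues i) : 𝕜) := by
  rw [hA.cfc_eq, IsHermitian.cfc, Unitary.conjStarAlgAut_apply, trace_mul_cycle,
    Unitary.coe_star_mul_self, Matrix.one_mul, trace_diagonal]
  rfl

lemma traceNorm_eq_sum_abs_eigenvalues {n : Type*} [Fintype n] [DecidableEq n]
    {X : Matrix n n ℂ} (hX : X.IsHermitian) :
    traceNorm X = ∑ i, |hX.eigenvalues i| := by
  have hXX := (posSemidef_conjTranspose_mul_self X).1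
  have h : traceNorm X = (cfc Real.sqrt (Xᴴ * X)).trace.re := by
    rw [hXX.cfc_eq, IsHermitian.cfc, Unitary.conjStarAlgAut_apply]
    rfl
  have h2 : cfc Real.sqrt (Xᴴ * X) = cfc (fun x : ℝ => |x|) X := by
    simp_rw [hX.eq, ← Real.sqrt_sq_eq_abs]
    rw [cfc_comp' Real.sqrt (· ^ 2) X, cfc_pow_id X 2 hX.isSelfAdjoint, pow_two]
  rw [h, h2, hX.trace_cfc_eq_sum, Complex.re_sum]
  simp

section Mixture

variable {n ι : Type*} [Fintype ι]

lemma isHermitian_sum_smul_vecMulVec (r : ι → ℝ) (g : ι → EuclideanSpace ℂ n) :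
    (∑ y, (r y : ℂ) • Matrix.of (fun i j => g y i * star (g y j))).IsHermitian := by
  refine isSelfAdjoint_sum _ fun y _ => IsSelfAdjoint.smul (Complex.conj_ofReal _) ?_
  exact (conjTranspose_vecMulVec _ _).trans (by ext; simp [vecMulVec])

variable [Fintype n]

lemma star_dotProduct_vecMulVec_mulVec (g x : EuclideanSpace ℂ n) :
    star ⇑x ⬝ᵥ (Matrix.of (fun i j => g i * star (g j)) *ᵥ ⇑x) = ((‖⟪g, x⟫_ℂ‖ ^ 2 : ℝ) : ℂ) := by
  have h : ∀ u w : EuclideanSpace ℂ n, star ⇑u ⬝ᵥ ⇑w = ⟪u, w⟫_ℂ := fun u w => by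
    rw [EuclideanSpace.inner_eq_star_dotProduct, dotProduct_comm]
  change star ⇑x ⬝ᵥ (vecMulVec ⇑g (star ⇑g) *ᵥ ⇑x) = _
  rw [vecMulVec_mulVec, dotProduct_smul, MulOpposite.smul_eq_mul_unop,
    MulOpposite.unop_op, h, h, ← inner_conj_symm, Complex.ofReal_pow, Complex.conj_mul']

lemma re_star_dotProduct_sum_smul_vecMulVec_mulVec (r : ι → ℝ) (g : ι → EuclideanSpace ℂ n)
    (x : EuclideanSpace ℂ n) :
    (star ⇑x ⬝ᵥ ((∑ y, (r y : ℂ) • Matrix.of (fun i j => g y i * star (g y j))) *ᵥ ⇑x)).re =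
      ∑ y, r y * ‖⟪g y, x⟫_ℂ‖ ^ 2 := by
  simp only [sum_mulVec, dotProduct_sum, smul_mulVec, dotProduct_smul,
    star_dotProduct_vecMulVec_mulVec, Complex.re_sum, smul_eq_mul, ← Complex.ofReal_mul,
    Complex.ofReal_re]

end Mixture

/-- Nussbaum–Szkoła bound. Let `p, q` be probability distributions on a
finite set `𝒴` and `{|e(y)⟩}`, `{|f(y)⟩}` two orthonormal bases of a finite-dimensional Hilbert
space.  With `ρ = Σ_y p(y)|e(y)⟩⟨e(y)|` and `σ = Σ_y q(y)|f(y)⟩⟨f(y)|`,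
`1 − (1/2)‖ρ − σ‖₁ ≥ (1/2) Σ_{y,y'} min(p(y), q(y')) |⟨e(y)|f(y')⟩|²`. -/
theorem stmt15 {𝒴 : Type*} [Fintype 𝒴] [DecidableEq 𝒴]
    (p q : 𝒴 → ℝ) (hp : ∀ y, 0 ≤ p y) (hp1 : ∑ y, p y = 1)
    (hq : ∀ y, 0 ≤ q y) (hq1 : ∑ y, q y = 1)
    (e f : 𝒴 → EuclideanSpace ℂ 𝒴) (he : Orthonormal ℂ e) (hf : Orthonormal ℂ f)
    (ρ σ : Matrix 𝒴 𝒴 ℂ)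
    (hρ : ρ = ∑ y, (p y : ℂ) • Matrix.of (fun i j => e y i * star (e y j)))
    (hσ : σ = ∑ y, (q y : ℂ) • Matrix.of (fun i j => f y i * star (f y j))) :
    (1 / 2) * ∑ y, ∑ y', min (p y) (q y') *
        ‖(inner (𝕜 := ℂ) (e y) (f y') : ℂ)‖ ^ 2 ≤
      1 - traceNorm (ρ - σ) / 2 := by
  have hΔ : (ρ - σ).IsHermitian := by
    rw [hρ, hσ]
    exact (isHermitian_sum_smul_vecMulVec p e).sub (isHermitian_sum_smul_vecMulVec q f)
  set v := hΔ.eigenvectorBasis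
  subst hρ hσ
  have heig : ∀ i, hΔ.eigenvalues i = mixtureDiag v p e i - mixtureDiag v q f i := fun i => by
    rw [hΔ.eigenvalues_eq, sub_mulVec, dotProduct_sub, RCLike.re_to_complex, Complex.sub_re,
      re_star_dotProduct_sum_smul_vecMulVec_mulVec, re_star_dotProduct_sum_smul_vecMulVec_mulVec]
    rfl
  have hP : ∑ i, mixtureDiag v p e i = 1 := by simp [sum_mixtureDiag, he.1, hp1]
  have hQ : ∑ i, mixtureDiag v q f i = 1 := by simp [sum_mixtureDiag, hf.1, hq1]
  refine (half_sum_min_mul_norm_inner_sq_le_sum_min v hp hq he hf).trans_eq ?_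
  rw [sum_min_eq_half_sum_add_sub_sum_abs, traceNorm_eq_sum_abs_eigenvalues hΔ, hP, hQ]
  simp only [heig]
  ring
end
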